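/- Let 𝕍_ν be the pseudo-variance function of the CSK family generated by ν (support bounded above), and let φ(ν) be the pushforward under x ↦ (x-γ)/δ with δ > 0. Then for m close enough to (m₀-γ)/δ in the domain of means of φ(ν): 𝕍_{φ(ν)}(m) = (m/(δ(mδ+γ))) · 𝕍_ν(δm + γ). -/

import Mathlib

/-!
With `w = V(m)/m` the pseudo-variance relation `G(m + V(m)/m) = m/V(m)` reads `G(a + w) = 1/w`
at `a = m`, and by `G_{φ(ν)}(z) = δ G_ν(δz + γ)` the relation for `φ(ν)` at `m` is the same
equation for `ν` at `a = δm + γ`, with `w = δ V_{φ(ν)}(m)/m`. So it suffices that `G_ν(a + w) = 1/w`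
has at most one solution `w`. If `w ≠ v` both solve it, integrating the partial-fraction expansion
of `(x - a)² / ((a + w - x)(a + v - x))` against `ν` gives `1 - 1 - 1 + 1 = 0`; the integrand is
nonnegative on the support of `ν`, so `ν` is concentrated at `a`, i.e. degenerate.
-/

open MeasureTheory Real Set Filter

theorem MeasureTheory.Measure.eq_dirac_of_ae_eq {α : Type*} [MeasurableSpace α] {ν : Measure α}
    [IsProbabilityMeasure ν] {a : α} (h : ∀ᵐ x ∂ν, x = a) : ν = Measure.dirac a :=
  calc ν = ν.map id := Measure.map_id.symm
    _ = ν.map (fun _ ↦ a) := Measure.map_congr h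
    _ = Measure.dirac a := by simp [Measure.map_const]

noncomputable def cauchyTransform (ν : Measure ℝ) (z : ℝ) : ℝ := ∫ x, 1 / (z - x) ∂ν

section CauchyTransform

variable {ν : Measure ℝ} {B : ℝ}

theorem integrable_one_div_sub [IsFiniteMeasure ν] (hsupp : ∀ᵐ x ∂ν, x ≤ B) {z : ℝ}
    (hz : B < z) : Integrable (fun x ↦ 1 / (z - x)) ν := by
  refine Integrable.of_bound
    ((measurable_const.sub measurable_id).const_div 1).aestronglyMeasurable (1 / (z - B)) ?_
  filter_upwards [hsupp] with x hx
  rw [norm_of_nonneg (one_div_nonneg.2 (by linarith))]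
  exact one_div_le_one_div_of_le (by linarith) (by linarith)

theorem sq_sub_div_mul_eq {a w v x : ℝ} (hwv : w ≠ v) (hw : a + w - x ≠ 0)
    (hv : a + v - x ≠ 0) :
    (x - a) ^ 2 / ((a + w - x) * (a + v - x)) =
      w * v / (v - w) * (1 / (a + w - x) - 1 / (a + v - x))
        - w * (1 / (a + w - x)) - v * (1 / (a + v - x)) + 1 := by
  have : v - w ≠ 0 := sub_ne_zero.2 hwv.symm
  field_simp
  ring

theorem eq_of_cauchyTransform_add_eq_inv [IsProbabilityMeasure ν]
    (hnd : ∀ c : ℝ, ν ≠ Measure.dirac c) (hsupp : ∀ᵐ x ∂ν, x ≤ B) {a w v : ℝ}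
    (hw : w ≠ 0) (hv : v ≠ 0) (hBw : B < a + w) (hBv : B < a + v)
    (hGw : cauchyTransform ν (a + w) = w⁻¹) (hGv : cauchyTransform ν (a + v) = v⁻¹) :
    w = v := by
  by_contra hwv
  set h : ℝ → ℝ := fun x ↦ (x - a) ^ 2 / ((a + w - x) * (a + v - x))
  have hfi := integrable_one_div_sub hsupp hBw
  have hgi := integrable_one_div_sub hsupp hBv
  have hrepr : h =ᵐ[ν] fun x ↦ w * v / (v - w) * (1 / (a + w - x) - 1 / (a + v - x))
      - w * (1 / (a + w - x)) - v * (1 / (a + v - x)) + 1 := by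
    filter_upwards [hsupp] with x hx
    exact sq_sub_div_mul_eq hwv (by linarith) (by linarith)
  have hint : Integrable h ν :=
    (((((hfi.sub hgi).const_mul _).sub (hfi.const_mul w)).sub (hgi.const_mul v)).add
      (integrable_const 1)).congr hrepr.symm
  have hzero : ∫ x, h x ∂ν = 0 := by
    unfold cauchyTransform at hGw hGv
    have : v - w ≠ 0 := sub_ne_zero.2 (Ne.symm hwv)
    rw [integral_congr_ae hrepr, integral_add (by fun_prop) (integrable_const 1),
      integral_sub (by fun_prop) (by fun_prop), integral_sub (by fun_prop) (by fun_prop),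
      integral_const_mul, integral_sub hfi hgi, integral_const_mul, integral_const_mul, hGw, hGv]
    simp only [integral_const, probReal_univ, smul_eq_mul, mul_one]
    field_simp
    ring
  have hnonneg : 0 ≤ᵐ[ν] h := by
    filter_upwards [hsupp] with x hx
    exact div_nonneg (sq_nonneg _) (mul_nonneg (by linarith) (by linarith))
  have hconc : ∀ᵐ x ∂ν, x = a := by
    filter_upwards [(integral_eq_zero_iff_of_nonneg_ae hnonneg hint).1 hzero, hsupp] with x hx hxB
    have : (x - a) ^ 2 = 0 := by
      simpa [h, (by linarith : a + w - x ≠ 0), (by linarith : a + v - x ≠ 0)] using hx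
    exact sub_eq_zero.1 (pow_eq_zero_iff two_ne_zero |>.1 this)
  exact hnd a (Measure.eq_dirac_of_ae_eq hconc)

end CauchyTransform

theorem stmt18_general (ν : Measure ℝ) [IsProbabilityMeasure ν]
    (hnd : ∀ c : ℝ, ν ≠ Measure.dirac c)
    (B γ δ : ℝ) (hδ : 0 < δ) (hsupp : ∀ᵐ x ∂ν, x ≤ B)
    (Vν Vφ : ℝ → ℝ) (Dν Dφ : Set ℝ)
    (hVν : ∀ m ∈ Dν, m ≠ 0 ∧ Vν m ≠ 0 ∧ B < m + Vν m / m ∧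
      (∫ x, 1 / ((m + Vν m / m) - x) ∂ν) = m / Vν m)
    (hVφ : ∀ m ∈ Dφ, m ≠ 0 ∧ Vφ m ≠ 0 ∧ B < δ * (m + Vφ m / m) + γ ∧
      δ * (∫ x, 1 / ((δ * (m + Vφ m / m) + γ) - x) ∂ν) = m / Vφ m)
    (m : ℝ) (hm : m ∈ Dφ) (hm' : δ * m + γ ∈ Dν) :
    Vφ m = (m / (δ * (m * δ + γ))) * Vν (δ * m + γ) := by
  obtain ⟨hm0, hVφ0, hBφ, hGφ⟩ := hVφ m hm
  obtain ⟨hm'0, hVν0, hBν, hGν⟩ := hVν _ hm'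
  have harg : δ * (m + Vφ m / m) + γ = δ * m + γ + δ * (Vφ m / m) := by ring
  have hGw : cauchyTransform ν (δ * m + γ + δ * (Vφ m / m)) = (δ * (Vφ m / m))⁻¹ := by
    rw [← harg, mul_inv, inv_div, ← hGφ, inv_mul_cancel_left₀ hδ.ne']
    rfl
  have hGv : cauchyTransform ν (δ * m + γ + Vν (δ * m + γ) / (δ * m + γ)) =
      (Vν (δ * m + γ) / (δ * m + γ))⁻¹ := by
    rw [inv_div]
    exact hGν
  have hwv := eq_of_cauchyTransform_add_eq_inv hnd hsupp
    (mul_ne_zero hδ.ne' (div_ne_zero hVφ0 hm0)) (div_ne_zero hVν0 hm'0) (harg ▸ hBφ) hBν hGw hGv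
  rw [mul_comm m δ]
  field_simp at hwv ⊢
  linear_combination hwv

/-- If Vν and Vφ are the pseudo-variance functions of the CSK
families generated by ν and by its image φ(ν) under x ↦ (x-γ)/δ (δ > 0),
characterized on their domains of means Dν, Dφ by the Cauchy-transform
relation G(m + V(m)/m) = m/V(m) (with G_{φ(ν)}(z) = δ G_ν(δz+γ)), then
Vφ(m) = (m/(δ(mδ+γ))) Vν(δm+γ). -/
theorem stmt18 (ν : Measure ℝ) [IsProbabilityMeasure ν]
    (hnd : ∀ c : ℝ, ν ≠ Measure.dirac c)
    (B γ δ : ℝ) (hδ : 0 < δ) (hB : 0 ≤ B) (hsupp : ∀ᵐ x ∂ν, x ≤ B)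
    (Vν Vφ : ℝ → ℝ) (Dν Dφ : Set ℝ)
    (hVν : ∀ m ∈ Dν, m ≠ 0 ∧ Vν m ≠ 0 ∧ B < m + Vν m / m ∧
      (∫ x, 1 / ((m + Vν m / m) - x) ∂ν) = m / Vν m)
    (hVφ : ∀ m ∈ Dφ, m ≠ 0 ∧ Vφ m ≠ 0 ∧ B < δ * (m + Vφ m / m) + γ ∧
      δ * (∫ x, 1 / ((δ * (m + Vφ m / m) + γ) - x) ∂ν) = m / Vφ m)
    (m : ℝ) (hm : m ∈ Dφ) (hm' : δ * m + γ ∈ Dν)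
    (hw : 0 < δ * Vφ m / m) (hv : 0 < Vν (δ * m + γ) / (δ * m + γ)) :
    Vφ m = (m / (δ * (m * δ + γ))) * Vν (δ * m + γ) :=
  stmt18_general ν hnd B γ δ hδ hsupp Vν Vφ Dν Dφ hVν hVφ m hm hm'
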